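/- Let t > 0, 0 ≤ y < t and F(x) = |x| + (x − y)²/(2t). Then for all real numbers a ≤ b, the ratio (∫_{Ta}^{Tb} exp(−F(x)/T) dx) / (∫_ℝ exp(−F(x)/T) dx) converges, as T → 0⁺, to ∫_a^b ((1 − y²/t²)/2) · exp(−|x| + x y/t) dx. In other words, if X_T has density proportional to exp(−F(x)/T), then X_T/T converges in distribution to the random variable X(y,t) with density x ↦ ((1 − y²/t²)/2)·exp(−|x|(1 − sgn(x)y/t)). -/

import Mathlib

/-! The substitution `x = T u` turns `exp (-F(x)/T)` into `exp (-y²/(2tT))` times the kernel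
`exp (-|u| + (y/t) u - (T/(2t)) u²)`; the constant factor and the Jacobian `T` cancel in the
ratio. As `T → 0⁺` the kernel increases to `exp (-|u| + (y/t) u)`, which is integrable, with
total mass `2 / (1 - (y/t)²)`, because `|y/t| < 1`. Dominated convergence then gives the limits of
numerator and denominator separately. -/

open Filter MeasureTheory

/-- The one-dimensional objective `F(x) = |x| + (x − y)²/(2t)`. -/
noncomputable def obj1 (y t x : ℝ) : ℝ := |x| + (x - y) ^ 2 / (2 * t)

open Real Set Topology

noncomputable def rescaledGibbs (c s u : ℝ) : ℝ := exp (-|u| + c * u - s * u ^ 2)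

lemma rescaledGibbs_zero (c : ℝ) : rescaledGibbs c 0 = fun u => exp (-|u| + c * u) := by
  ext u
  simp [rescaledGibbs]

lemma rescaledGibbs_pos (c s u : ℝ) : 0 < rescaledGibbs c s u := exp_pos _

lemma rescaledGibbs_le_rescaledGibbs_zero (c u : ℝ) {s : ℝ} (hs : 0 ≤ s) :
    rescaledGibbs c s u ≤ rescaledGibbs c 0 u :=
  exp_le_exp.2 (by nlinarith [sq_nonneg u])

lemma continuous_rescaledGibbs (c s : ℝ) : Continuous (rescaledGibbs c s) := by
  unfold rescaledGibbs; fun_prop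

lemma continuous_rescaledGibbs_param (c u : ℝ) : Continuous fun s => rescaledGibbs c s u := by
  unfold rescaledGibbs; fun_prop

lemma exp_neg_abs_add_mul_eqOn_Iic (c : ℝ) :
    EqOn (fun u => exp (-|u| + c * u)) (fun u => exp ((c + 1) * u)) (Iic 0) := by
  intro u hu
  simp only [abs_of_nonpos (show u ≤ 0 from hu)]
  ring_nf

lemma exp_neg_abs_add_mul_eqOn_Ioi (c : ℝ) :
    EqOn (fun u => exp (-|u| + c * u)) (fun u => exp ((c - 1) * u)) (Ioi 0) := by
  intro u hu
  simp only [abs_of_pos (show 0 < u from hu)]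
  ring_nf

lemma integrableOn_exp_neg_abs_add_mul_Iic {c : ℝ} (hc : |c| < 1) :
    IntegrableOn (fun u => exp (-|u| + c * u)) (Iic 0) :=
  (integrableOn_exp_mul_Iic (by linarith [neg_abs_le c]) 0).congr_fun
    (exp_neg_abs_add_mul_eqOn_Iic c).symm measurableSet_Iic

lemma integrableOn_exp_neg_abs_add_mul_Ioi {c : ℝ} (hc : |c| < 1) :
    IntegrableOn (fun u => exp (-|u| + c * u)) (Ioi 0) :=
  (integrableOn_exp_mul_Ioi (by linarith [le_abs_self c]) 0).congr_fun
    (exp_neg_abs_add_mul_eqOn_Ioi c).symm measurableSet_Ioi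

lemma integrable_exp_neg_abs_add_mul {c : ℝ} (hc : |c| < 1) : Integrable fun u => exp (-|u| + c * u) := by
  rw [← integrableOn_univ, ← Iic_union_Ioi (a := 0)]
  exact (integrableOn_exp_neg_abs_add_mul_Iic hc).union (integrableOn_exp_neg_abs_add_mul_Ioi hc)

lemma integral_exp_neg_abs_add_mul {c : ℝ} (hc : |c| < 1) : ∫ u, exp (-|u| + c * u) = 2 / (1 - c ^ 2) := by
  obtain ⟨hc₁, hc₂⟩ := abs_lt.1 hc
  rw [← intervalIntegral.integral_Iic_add_Ioi (integrableOn_exp_neg_abs_add_mul_Iic hc)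
      (integrableOn_exp_neg_abs_add_mul_Ioi hc),
    setIntegral_congr_fun measurableSet_Iic (exp_neg_abs_add_mul_eqOn_Iic c),
    setIntegral_congr_fun measurableSet_Ioi (exp_neg_abs_add_mul_eqOn_Ioi c),
    integral_exp_mul_Iic (by linarith), integral_exp_mul_Ioi (by linarith)]
  have h₁ : c + 1 ≠ 0 := by linarith
  have h₂ : c - 1 ≠ 0 := by linarith
  have h₃ : 1 - c ^ 2 ≠ 0 := by nlinarith
  simp only [mul_zero, exp_zero]
  field_simp
  ring

lemma integrable_rescaledGibbs_zero {c : ℝ} (hc : |c| < 1) : Integrable (rescaledGibbs c 0) := by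
  simpa only [rescaledGibbs_zero] using integrable_exp_neg_abs_add_mul hc

lemma integral_rescaledGibbs_zero {c : ℝ} (hc : |c| < 1) :
    ∫ u, rescaledGibbs c 0 u = 2 / (1 - c ^ 2) := by
  simpa only [rescaledGibbs_zero] using integral_exp_neg_abs_add_mul hc

lemma tendsto_integral_rescaledGibbs {μ : Measure ℝ} {c : ℝ}
    (h : Integrable (rescaledGibbs c 0) μ) :
    Tendsto (fun s => ∫ u, rescaledGibbs c s u ∂μ) (𝓝[≥] 0)
      (𝓝 (∫ u, rescaledGibbs c 0 u ∂μ)) := by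
  refine tendsto_integral_filter_of_dominated_convergence _
    (.of_forall fun s => (continuous_rescaledGibbs c s).aestronglyMeasurable) ?_ h
    (.of_forall fun u => ((continuous_rescaledGibbs_param c u).tendsto 0).mono_left
      nhdsWithin_le_nhds)
  filter_upwards [self_mem_nhdsWithin] with s hs
  refine .of_forall fun u => ?_
  rw [norm_of_nonneg (rescaledGibbs_pos c s u).le]
  exact rescaledGibbs_le_rescaledGibbs_zero c u hs

lemma tendsto_intervalIntegral_rescaledGibbs {c : ℝ} (hc : |c| < 1) (a b : ℝ) :
    Tendsto (fun s => ∫ u in a..b, rescaledGibbs c s u) (𝓝[≥] 0)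
      (𝓝 (∫ u in a..b, rescaledGibbs c 0 u)) := by
  have h := integrable_rescaledGibbs_zero hc
  exact (tendsto_integral_rescaledGibbs h.restrict).sub (tendsto_integral_rescaledGibbs h.restrict)

lemma exp_neg_obj1_mul_div {t T : ℝ} (ht : t ≠ 0) (hT : 0 < T) (y u : ℝ) :
    exp (-obj1 y t (T * u) / T) =
      exp (-(y ^ 2 / (2 * t * T))) * rescaledGibbs (y / t) (T / (2 * t)) u := by
  rw [rescaledGibbs, ← exp_add, obj1, abs_mul, abs_of_pos hT]
  congr 1
  field_simp
  ring

lemma gibbs_ratio_eq_rescaledGibbs_ratio {t T : ℝ} (ht : t ≠ 0) (hT : 0 < T) (y a b : ℝ) :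
    (∫ x in (T * a)..(T * b), exp (-obj1 y t x / T)) / ∫ x, exp (-obj1 y t x / T) =
      (∫ u in a..b, rescaledGibbs (y / t) (T / (2 * t)) u) /
        ∫ u, rescaledGibbs (y / t) (T / (2 * t)) u := by
  set f := fun x => exp (-obj1 y t x / T)
  set K := rescaledGibbs (y / t) (T / (2 * t))
  set e := exp (-(y ^ 2 / (2 * t * T)))
  have hscale : (fun u => f (T * u)) = fun u => e * K u :=
    funext (exp_neg_obj1_mul_div ht hT y)
  have hnum : ∫ x in (T * a)..(T * b), f x = T * (e * ∫ u in a..b, K u) := by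
    rw [← intervalIntegral.smul_integral_comp_mul_left, smul_eq_mul,
      ← intervalIntegral.integral_const_mul e, hscale]
  have hden : ∫ x, f x = T * (e * ∫ u, K u) := by
    rw [← integral_const_mul e, ← hscale, Measure.integral_comp_mul_left,
      abs_of_pos (inv_pos.2 hT), smul_eq_mul, mul_inv_cancel_left₀ hT.ne']
  rw [hnum, hden, mul_div_mul_left _ _ hT.ne', mul_div_mul_left _ _ (exp_pos _).ne']

theorem stmt9_general (t y : ℝ) (ht : 0 < t) (hy0 : 0 ≤ y) (hyt : y < t)
    (a b : ℝ) :
    Tendsto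
      (fun T : ℝ =>
        (∫ x in (T * a)..(T * b), Real.exp (-(obj1 y t x) / T)) /
          ∫ x : ℝ, Real.exp (-(obj1 y t x) / T))
      (nhdsWithin 0 (Set.Ioi 0))
      (nhds (∫ x in a..b, (1 - y ^ 2 / t ^ 2) / 2 * Real.exp (-|x| + x * y / t))) := by
  have hc : |y / t| < 1 := by
    rw [abs_lt, lt_div_iff₀ ht, div_lt_one ht]
    constructor <;> linarith
  have hZ := integral_rescaledGibbs_zero hc
  have hZ₀ : ∫ u, rescaledGibbs (y / t) 0 u ≠ 0 := by
    rw [hZ]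
    have := (sq_lt_one_iff_abs_lt_one (y / t)).2 hc
    exact div_ne_zero two_ne_zero (by linarith)
  have hs : Tendsto (fun T : ℝ => T / (2 * t)) (𝓝[>] 0) (𝓝[≥] 0) := by
    refine tendsto_nhdsWithin_of_tendsto_nhds_of_eventually_within _ ?_ ?_
    · simpa using ((continuous_id.div_const (2 * t)).tendsto 0).mono_left nhdsWithin_le_nhds
    · filter_upwards [self_mem_nhdsWithin] with T (hT : 0 < T)
      exact (div_pos hT (by positivity)).le
  have hlim := ((tendsto_intervalIntegral_rescaledGibbs hc a b).div
    (tendsto_integral_rescaledGibbs (integrable_rescaledGibbs_zero hc)) hZ₀).comp hs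
  have hval : ∫ x in a..b, (1 - y ^ 2 / t ^ 2) / 2 * exp (-|x| + x * y / t) =
      (∫ u in a..b, rescaledGibbs (y / t) 0 u) / ∫ u, rescaledGibbs (y / t) 0 u := by
    rw [hZ, rescaledGibbs_zero, intervalIntegral.integral_const_mul, div_pow]
    simp_rw [mul_div_assoc, mul_comm (y / t)]
    rw [div_div_eq_mul_div, mul_div_assoc, mul_comm]
  rw [hval]
  refine hlim.congr' ?_
  filter_upwards [self_mem_nhdsWithin] with T hT
  exact (gibbs_ratio_eq_rescaledGibbs_ratio ht.ne' hT y a b).symm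

/-- For `0 ≤ y < t`, the law of `X_T/T` converges to the law with density
`x ↦ ((1 − y²/t²)/2)·exp(−|x| + xy/t)`. -/
theorem stmt9 (t y : ℝ) (ht : 0 < t) (hy0 : 0 ≤ y) (hyt : y < t)
    (a b : ℝ) (hab : a ≤ b) :
    Tendsto
      (fun T : ℝ =>
        (∫ x in (T * a)..(T * b), Real.exp (-(obj1 y t x) / T)) /
          ∫ x : ℝ, Real.exp (-(obj1 y t x) / T))
      (nhdsWithin 0 (Set.Ioi 0))
      (nhds (∫ x in a..b, (1 - y ^ 2 / t ^ 2) / 2 * Real.exp (-|x| + x * y / t))) :=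
  stmt9_general t y ht hy0 hyt a b
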